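/- arXiv:2205.15508 — 2 statements merged into one kernel-verified Lean document; each statement's English description precedes it below -/
import Mathlib

section
/- For any fixed w > 0, the function f(ρ) = ∫_{-∞}^{∞} e^{-(t-ρ)²/2} / (t² + w) dt is an even function of ρ and is monotonically decreasing in |ρ|. -/
open MeasureTheory Real

private lemma gauss_shift_integrable (c : ℝ) :
    Integrable (fun s : ℝ => Real.exp (-(s + c) ^ 2 / 2)) := by
  have h := (integrable_exp_neg_mul_sq (by norm_num : (0:ℝ) < 1/2)).comp_add_right c
  convert h using 2 with s
  ring_nf

private lemma main_integrable (w : ℝ) (hw : 0 < w) (c r : ℝ) :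
    Integrable (fun s : ℝ => Real.exp (-(s + c) ^ 2 / 2) / ((s + r) ^ 2 + w)) := by
  apply Integrable.mono' ((gauss_shift_integrable c).div_const w)
  · apply Continuous.aestronglyMeasurable
    exact Continuous.div (by continuity) (by continuity) (fun s => by positivity)
  · filter_upwards with s
    rw [Real.norm_eq_abs, abs_of_nonneg (by positivity)]
    gcongr
    nlinarith [sq_nonneg (s + r)]

private lemma gauss_zero_integrable (w : ℝ) (hw : 0 < w) (r : ℝ) :
    Integrable (fun s : ℝ => Real.exp (-s ^ 2 / 2) / ((s + r) ^ 2 + w)) := by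
  simpa using main_integrable w hw 0 r

/-- For fixed `w > 0`, `f(ρ) = ∫ e^{-(t-ρ)²/2}/(t²+w) dt` is even in `ρ` and nonincreasing on
`[0, ∞)` (hence monotonically decreasing in `|ρ|`). -/
theorem gaussian_cauchy_convolution_even_antitone
    (w : ℝ) (hw : 0 < w)
    (f : ℝ → ℝ)
    (hf : ∀ ρ : ℝ, f ρ = ∫ t : ℝ, Real.exp (-(t - ρ) ^ 2 / 2) / (t ^ 2 + w)) :
    (∀ ρ : ℝ, f (-ρ) = f ρ) ∧ AntitoneOn f (Set.Ici 0) := by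
  -- a convenient reparametrisation: f ρ = ∫ s, exp(-s²/2)/((s+ρ)²+w)
  have hf' : ∀ ρ : ℝ, f ρ = ∫ s : ℝ, Real.exp (-s ^ 2 / 2) / ((s + ρ) ^ 2 + w) := by
    intro ρ
    rw [hf, ← integral_add_right_eq_self
      (fun t => Real.exp (-(t - ρ) ^ 2 / 2) / (t ^ 2 + w)) ρ]
    congr 1
    funext s
    rw [show (s + ρ - ρ) ^ 2 = s ^ 2 from by ring]
  constructor
  · intro ρ
    rw [hf, hf, ← integral_neg_eq_self
      (fun t => Real.exp (-(t - ρ) ^ 2 / 2) / (t ^ 2 + w)) volume]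
    congr 1
    funext t
    rw [show (-t - ρ) ^ 2 = (t - -ρ) ^ 2 from by ring, show ((-t) : ℝ) ^ 2 = t ^ 2 from by ring]
  · intro ρ₁ h1 ρ₂ h2 h12
    simp only [Set.mem_Ici] at h1 h2
    set a : ℝ := ρ₁ + ρ₂ with ha
    have I1 := gauss_zero_integrable w hw ρ₁
    have I2 := gauss_zero_integrable w hw ρ₂
    have J1 := main_integrable w hw a ρ₁
    have J2 := main_integrable w hw a ρ₂
    -- first representation of the difference
    have e1 : f ρ₁ - f ρ₂ = ∫ s : ℝ,
        (Real.exp (-s ^ 2 / 2) / ((s + ρ₁) ^ 2 + w)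
          - Real.exp (-s ^ 2 / 2) / ((s + ρ₂) ^ 2 + w)) := by
      rw [hf' ρ₁, hf' ρ₂, integral_sub I1 I2]
    -- second representation, via the reflection s ↦ -s - a
    have e2 : f ρ₁ - f ρ₂ = ∫ s : ℝ,
        (Real.exp (-(s + a) ^ 2 / 2) / ((s + ρ₂) ^ 2 + w)
          - Real.exp (-(s + a) ^ 2 / 2) / ((s + ρ₁) ^ 2 + w)) := by
      set φ : ℝ → ℝ := fun u => Real.exp (-u ^ 2 / 2) / ((u + ρ₁) ^ 2 + w)
        - Real.exp (-u ^ 2 / 2) / ((u + ρ₂) ^ 2 + w) with hφ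
      rw [e1]
      calc ∫ s, φ s = ∫ u : ℝ, φ (-u) := (integral_neg_eq_self φ volume).symm
        _ = ∫ s : ℝ, φ (-(s + a)) :=
            (integral_add_right_eq_self (fun u => φ (-u)) a).symm
        _ = _ := by
            congr 1
            funext s
            simp only [hφ]
            rw [show (-(s + a)) ^ 2 = (s + a) ^ 2 from by ring,
              show (-(s + a) + ρ₁) ^ 2 = (s + ρ₂) ^ 2 from by rw [ha]; ring,
              show (-(s + a) + ρ₂) ^ 2 = (s + ρ₁) ^ 2 from by rw [ha]; ring]
    -- sum the two representations
    have e3 : 2 * (f ρ₁ - f ρ₂) = ∫ s : ℝ,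
        ((Real.exp (-s ^ 2 / 2) - Real.exp (-(s + a) ^ 2 / 2))
          * (1 / ((s + ρ₁) ^ 2 + w) - 1 / ((s + ρ₂) ^ 2 + w))) := by
      have K1 : Integrable (fun s : ℝ => Real.exp (-s ^ 2 / 2) / ((s + ρ₁) ^ 2 + w)
          - Real.exp (-s ^ 2 / 2) / ((s + ρ₂) ^ 2 + w)) volume := I1.sub I2
      have K2 : Integrable (fun s : ℝ => Real.exp (-(s + a) ^ 2 / 2) / ((s + ρ₂) ^ 2 + w)
          - Real.exp (-(s + a) ^ 2 / 2) / ((s + ρ₁) ^ 2 + w)) volume := J2.sub J1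
      rw [two_mul]
      nth_rw 1 [e1]
      nth_rw 1 [e2]
      rw [← integral_add K1 K2]
      congr 1
      funext s
      beta_reduce
      ring
    -- the integrand in e3 is pointwise nonnegative
    have hnn : 0 ≤ ∫ s : ℝ,
        ((Real.exp (-s ^ 2 / 2) - Real.exp (-(s + a) ^ 2 / 2))
          * (1 / ((s + ρ₁) ^ 2 + w) - 1 / ((s + ρ₂) ^ 2 + w))) := by
      apply integral_nonneg
      intro s
      dsimp only [Pi.zero_apply]
      have ha0 : 0 ≤ a := by positivity
      have hd1 : (0:ℝ) < (s + ρ₁) ^ 2 + w := by positivity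
      have hd2 : (0:ℝ) < (s + ρ₂) ^ 2 + w := by positivity
      rcases le_or_gt 0 (2 * s + a) with hs | hs
      · apply mul_nonneg
        · have : -(s + a) ^ 2 / 2 ≤ -s ^ 2 / 2 := by nlinarith
          simpa using Real.exp_le_exp.mpr this
        · have : (s + ρ₁) ^ 2 + w ≤ (s + ρ₂) ^ 2 + w := by nlinarith
          simpa using one_div_le_one_div_of_le hd1 this
      · have hA : Real.exp (-s ^ 2 / 2) ≤ Real.exp (-(s + a) ^ 2 / 2) :=
          Real.exp_le_exp.mpr (by nlinarith)
        have hB : 1 / ((s + ρ₁) ^ 2 + w) ≤ 1 / ((s + ρ₂) ^ 2 + w) :=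
          one_div_le_one_div_of_le hd2 (by nlinarith)
        nlinarith [mul_nonneg (sub_nonneg.2 hA) (sub_nonneg.2 hB)]
    linarith [e3 ▸ hnn]
end

section
/- Let x ∼ N(μ e_N, σ² I_N) with μ ≠ 0 and L = D − A the combinatorial Laplacian of a connected graph. Then the expectation of the high-frequency area E[S_high] = E[xᵀLx/xᵀx], when expressed via x̂ = Uᵀx as E[(Σ_{i≥2} λᵢ x̂ᵢ²)/(Σᵢ x̂ᵢ²)], is monotonically increasing in σ/|μ| (it depends on (μ,σ) only through σ/|μ|, and increases as this ratio increases). -/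
open MeasureTheory ProbabilityTheory BigOperators
open Real Set

/-!
Scaling `x ↦ x / σ` leaves the Rayleigh quotient unchanged, so the expectation is a function
`I(r)` of `r = μ √N / σ` alone, computed against independent standard Gaussians with the first
one shifted by `r`. Splitting off the first coordinate `t` (where `λ₁ = 0`), the integrand is
`A / (t² + B)` with `A, B ≥ 0` depending only on the other coordinates. Writing
`1 / (t² + B) = ∫₀^∞ e^{-s B} e^{-s t²} ds` and using the closed form
`E[e^{-s t²}] = (2s + 1)^{-1/2} e^{-s r² / (2s + 1)}` for `t ∼ N(r, 1)`, the expectation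
is decreasing in `r²`, i.e. increasing in `σ / |μ|`.
-/

lemma integral_exp_neg_mul_sq_gaussianReal {s : ℝ} (hs : 0 < 2 * s + 1) (r : ℝ) :
    ∫ t, exp (-(s * t ^ 2)) ∂gaussianReal r 1 =
      (√(2 * s + 1))⁻¹ * exp (-(s * r ^ 2 / (2 * s + 1))) := by
  have hs' : 2 * s + 1 ≠ 0 := hs.ne'
  have hsq : ∀ t, gaussianPDFReal r 1 t • exp (-(s * t ^ 2)) = (√(2 * π))⁻¹ *
      exp (-(s * r ^ 2 / (2 * s + 1))) * exp (-((s + 1 / 2) * (t + -(r / (2 * s + 1))) ^ 2)) := by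
    intro t
    simp only [gaussianPDFReal, NNReal.coe_one, mul_one, smul_eq_mul, mul_assoc, ← exp_add]
    congr 2
    field_simp
    ring
  rw [integral_gaussianReal_eq_integral_smul one_ne_zero]
  simp_rw [hsq]
  have hπ : π / (s + 1 / 2) = 2 * π / (2 * s + 1) := by field_simp
  rw [integral_const_mul, integral_add_right_eq_self (fun t => exp (-((s + 1 / 2) * t ^ 2)))]
  simp_rw [← neg_mul]
  rw [integral_gaussian, hπ, sqrt_div (by positivity)]
  have : 0 < √(2 * π) := by positivity
  field_simp

lemma integral_exp_neg_mul_sq_gaussianReal_anti {s : ℝ} (hs : 0 ≤ s) {r₁ r₂ : ℝ}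
    (h : r₂ ^ 2 ≤ r₁ ^ 2) :
    ∫ t, exp (-(s * t ^ 2)) ∂gaussianReal r₁ 1 ≤
      ∫ t, exp (-(s * t ^ 2)) ∂gaussianReal r₂ 1 := by
  have hs1 : 0 < 2 * s + 1 := by positivity
  rw [integral_exp_neg_mul_sq_gaussianReal hs1, integral_exp_neg_mul_sq_gaussianReal hs1]
  gcongr

lemma ofReal_inv_eq_lintegral_exp_neg_mul {c : ℝ} (hc : 0 < c) :
    ENNReal.ofReal c⁻¹ = ∫⁻ s in Ioi 0, ENNReal.ofReal (exp (-(s * c))) := by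
  have hint : IntegrableOn (fun s => exp (-(s * c))) (Ioi 0) := by
    simpa [mul_comm] using exp_neg_integrableOn_Ioi 0 hc
  rw [← ofReal_integral_eq_lintegral_ofReal hint (ae_of_all _ fun s => (exp_pos _).le)]
  congr 1
  have := integral_comp_mul_left_Ioi (fun x => exp (-x)) 0 hc
  simp only [mul_zero, integral_exp_neg_Ioi_zero, smul_eq_mul, mul_one] at this
  simpa [mul_comm] using this.symm

lemma lintegral_ofReal_inv_le_of_lintegral_exp_neg_le {α : Type*} [MeasurableSpace α]
    {μ ν : Measure α} [SFinite μ] [SFinite ν] {f : α → ℝ} (hf : Measurable f)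
    (hpos : ∀ x, 0 < f x)
    (h : ∀ s, 0 < s → ∫⁻ x, ENNReal.ofReal (exp (-(s * f x))) ∂μ ≤
      ∫⁻ x, ENNReal.ofReal (exp (-(s * f x))) ∂ν) :
    ∫⁻ x, ENNReal.ofReal (f x)⁻¹ ∂μ ≤ ∫⁻ x, ENNReal.ofReal (f x)⁻¹ ∂ν := by
  simp_rw [ofReal_inv_eq_lintegral_exp_neg_mul (hpos _)]
  rw [lintegral_lintegral_swap (μ := μ) (by fun_prop),
    lintegral_lintegral_swap (μ := ν) (by fun_prop)]
  exact setLIntegral_mono' measurableSet_Ioi fun s hs => h s hs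

lemma integral_le_integral_of_lintegral_ofReal_le {α : Type*} [MeasurableSpace α]
    {μ ν : Measure α} {f : α → ℝ} (hfμ : Integrable f μ) (hfν : Integrable f ν)
    (hf : 0 ≤ f) (h : ∫⁻ x, ENNReal.ofReal (f x) ∂μ ≤ ∫⁻ x, ENNReal.ofReal (f x) ∂ν) :
    ∫ x, f x ∂μ ≤ ∫ x, f x ∂ν := by
  rwa [← ofReal_integral_eq_lintegral_ofReal hfμ (ae_of_all _ hf),
    ← ofReal_integral_eq_lintegral_ofReal hfν (ae_of_all _ hf),
    ENNReal.ofReal_le_ofReal_iff (integral_nonneg hf)] at h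

lemma integral_inv_sq_add_gaussianReal_anti {B : ℝ} (hB : 0 < B) {r₁ r₂ : ℝ}
    (h : r₂ ^ 2 ≤ r₁ ^ 2) :
    ∫ t, (t ^ 2 + B)⁻¹ ∂gaussianReal r₁ 1 ≤ ∫ t, (t ^ 2 + B)⁻¹ ∂gaussianReal r₂ 1 := by
  have hpos : ∀ t : ℝ, 0 < t ^ 2 + B := fun t => by positivity
  have hint_exp : ∀ (r s : ℝ), 0 ≤ s →
      Integrable (fun t => exp (-(s * (t ^ 2 + B)))) (gaussianReal r 1) := fun r s hs =>
    .of_bound (by fun_prop) 1 (ae_of_all _ fun t => by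
      rw [norm_of_nonneg (exp_pos _).le, exp_le_one_iff, neg_nonpos]
      exact mul_nonneg hs (hpos t).le)
  have hint_inv : ∀ r, Integrable (fun t : ℝ => (t ^ 2 + B)⁻¹) (gaussianReal r 1) := fun r =>
    .of_bound (by fun_prop) B⁻¹ (ae_of_all _ fun t => by
      rw [norm_of_nonneg (inv_pos.2 (hpos t)).le]
      exact inv_anti₀ hB (le_add_of_nonneg_left (sq_nonneg t)))
  refine integral_le_integral_of_lintegral_ofReal_le (hint_inv r₁) (hint_inv r₂)
    (fun t => (inv_pos.2 (hpos t)).le) ?_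
  refine lintegral_ofReal_inv_le_of_lintegral_exp_neg_le (by fun_prop) hpos fun s hs => ?_
  have hexp_nonneg : ∀ r, 0 ≤ᵐ[gaussianReal r 1] fun t => exp (-(s * (t ^ 2 + B))) :=
    fun _ => ae_of_all _ fun _ => (exp_pos _).le
  rw [← ofReal_integral_eq_lintegral_ofReal (hint_exp r₁ s hs.le) (hexp_nonneg r₁),
    ← ofReal_integral_eq_lintegral_ofReal (hint_exp r₂ s hs.le) (hexp_nonneg r₂)]
  have hsplit : ∀ t, exp (-(s * (t ^ 2 + B))) = exp (-(s * B)) * exp (-(s * t ^ 2)) := by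
    intro t; rw [← exp_add]; ring_nf
  simp_rw [hsplit, integral_const_mul]
  exact ENNReal.ofReal_le_ofReal <| mul_le_mul_of_nonneg_left
    (integral_exp_neg_mul_sq_gaussianReal_anti hs.le h) (exp_pos _).le

section FinCons

variable {n : ℕ} {α E : Type*} [MeasurableSpace α] [NormedAddCommGroup E] [NormedSpace ℝ E]
  {μ : Fin (n + 1) → Measure α} [∀ i, SigmaFinite (μ i)]

lemma measurePreserving_fin_cons :
    MeasurePreserving (fun z : α × (Fin n → α) => (Fin.cons z.1 z.2 : Fin (n + 1) → α))
      ((μ 0).prod (Measure.pi fun j => μ j.succ)) (Measure.pi μ) := by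
  convert (measurePreserving_piFinSuccAbove μ 0).symm using 1
  · ext z : 1
    simp [MeasurableEquiv.piFinSuccAbove_symm_apply]
    rfl
  · simp

lemma measurableEmbedding_fin_cons :
    MeasurableEmbedding fun z : α × (Fin n → α) => (Fin.cons z.1 z.2 : Fin (n + 1) → α) := by
  convert (MeasurableEquiv.piFinSuccAbove (fun _ => α) 0).symm.measurableEmbedding using 1
  ext z : 1
  simp [MeasurableEquiv.piFinSuccAbove_symm_apply]
  rfl

lemma integral_pi_fin_succ {f : (Fin (n + 1) → α) → E} (hf : Integrable f (Measure.pi μ)) :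
    ∫ y, f y ∂Measure.pi μ = ∫ w, ∫ t, f (Fin.cons t w) ∂μ 0 ∂Measure.pi fun j => μ j.succ := by
  rw [← measurePreserving_fin_cons.integral_comp measurableEmbedding_fin_cons,
    integral_prod_symm]
  exact (measurePreserving_fin_cons.integrable_comp_emb measurableEmbedding_fin_cons).2 hf

lemma MeasureTheory.Integrable.integral_fin_cons {f : (Fin (n + 1) → α) → E}
    (hf : Integrable f (Measure.pi μ)) :
    Integrable (fun w => ∫ t, f (Fin.cons t w) ∂μ 0) (Measure.pi fun j => μ j.succ) :=
  ((measurePreserving_fin_cons.integrable_comp_emb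
    measurableEmbedding_fin_cons).2 hf).integral_prod_right

end FinCons

noncomputable def highFreqArea {ι : Type*} [Fintype ι] (lam y : ι → ℝ) : ℝ :=
  (∑ i, lam i * y i ^ 2) / ∑ i, y i ^ 2

section HighFreqArea

variable {ι : Type*} [Fintype ι] {lam : ι → ℝ}

lemma sum_mul_sq_le_sum_mul_sum_sq (hlam : 0 ≤ lam) (y : ι → ℝ) :
    ∑ i, lam i * y i ^ 2 ≤ (∑ i, lam i) * ∑ i, y i ^ 2 := by
  rw [Finset.mul_sum]
  exact Finset.sum_le_sum fun i _ => mul_le_mul_of_nonneg_right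
    (Finset.single_le_sum (fun j _ => hlam j) (Finset.mem_univ i)) (sq_nonneg _)

@[fun_prop]
lemma measurable_highFreqArea : Measurable (highFreqArea lam) := by
  unfold highFreqArea; fun_prop

lemma highFreqArea_nonneg (hlam : 0 ≤ lam) (y : ι → ℝ) : 0 ≤ highFreqArea lam y :=
  div_nonneg (Finset.sum_nonneg fun i _ => mul_nonneg (hlam i) (sq_nonneg _))
    (Finset.sum_nonneg fun _ _ => sq_nonneg _)

lemma highFreqArea_le_sum (hlam : 0 ≤ lam) (y : ι → ℝ) : highFreqArea lam y ≤ ∑ i, lam i :=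
  div_le_of_le_mul₀ (Finset.sum_nonneg fun _ _ => sq_nonneg _)
    (Finset.sum_nonneg fun i _ => hlam i) (sum_mul_sq_le_sum_mul_sum_sq hlam y)

lemma highFreqArea_smul {c : ℝ} (hc : c ≠ 0) (y : ι → ℝ) :
    highFreqArea lam (c • y) = highFreqArea lam y := by
  simp only [highFreqArea, Pi.smul_apply, smul_eq_mul, mul_pow, mul_left_comm (lam _),
    ← Finset.mul_sum]
  exact mul_div_mul_left _ _ (pow_ne_zero 2 hc)

lemma integrable_highFreqArea (hlam : 0 ≤ lam) (μ : Measure (ι → ℝ)) [IsFiniteMeasure μ] :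
    Integrable (highFreqArea lam) μ :=
  .of_bound (by fun_prop) (∑ i, lam i) (ae_of_all _ fun y => by
    rw [norm_of_nonneg (highFreqArea_nonneg hlam y)]
    exact highFreqArea_le_sum hlam y)

end HighFreqArea

lemma highFreqArea_cons {n : ℕ} {lam : Fin (n + 1) → ℝ} (h0 : lam 0 = 0) (t : ℝ)
    (w : Fin n → ℝ) :
    highFreqArea lam (Fin.cons t w) =
      (∑ j, lam j.succ * w j ^ 2) / (t ^ 2 + ∑ j, w j ^ 2) := by
  simp [highFreqArea, Fin.sum_univ_succ, h0]

lemma integral_highFreqArea_anti {n : ℕ} {lam : Fin (n + 1) → ℝ} (hlam : 0 ≤ lam)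
    (h0 : lam 0 = 0) {r₁ r₂ : ℝ} (h : r₂ ^ 2 ≤ r₁ ^ 2) :
    ∫ y, highFreqArea lam y ∂Measure.pi (fun i => gaussianReal (if i = 0 then r₁ else 0) 1) ≤
      ∫ y, highFreqArea lam y ∂Measure.pi (fun i => gaussianReal (if i = 0 then r₂ else 0) 1) := by
  have hint := fun r : ℝ => integrable_highFreqArea hlam
    (Measure.pi (fun i : Fin (n + 1) => gaussianReal (if i = 0 then r else 0) 1))
  rw [integral_pi_fin_succ (hint r₁), integral_pi_fin_succ (hint r₂)]
  refine integral_mono (hint r₁).integral_fin_cons (hint r₂).integral_fin_cons fun w => ?_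
  simp only [↓reduceIte, highFreqArea_cons h0]
  have hA : 0 ≤ ∑ j, lam j.succ * w j ^ 2 :=
    Finset.sum_nonneg fun j _ => mul_nonneg (hlam _) (sq_nonneg _)
  rcases (Finset.sum_nonneg fun j _ => sq_nonneg (w j)).eq_or_lt with hB | hB
  · have hA0 : ∑ j, lam j.succ * w j ^ 2 = 0 := le_antisymm
      ((sum_mul_sq_le_sum_mul_sum_sq (fun j => hlam j.succ) w).trans_eq
        (by rw [← hB, mul_zero])) hA
    simp [hA0]
  · simp_rw [div_eq_mul_inv, integral_const_mul]
    exact mul_le_mul_of_nonneg_left (integral_inv_sq_add_gaussianReal_anti hB h) hA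

lemma pi_gaussianReal_mul_eq_map_smul {ι : Type*} [Fintype ι] (σ : NNReal) (m : ι → ℝ) :
    Measure.pi (fun i => gaussianReal (σ * m i) (σ ^ 2)) =
      (Measure.pi fun i => gaussianReal (m i) 1).map ((σ : ℝ) • ·) := by
  have hmap : ∀ i,
      (gaussianReal (m i) 1).map ((σ : ℝ) * ·) = gaussianReal (σ * m i) (σ ^ 2) := by
    intro i
    rw [gaussianReal_map_const_mul, mul_one]
    rfl
  simp_rw [← hmap]
  exact (Measure.pi_map_pi fun i => by fun_prop).symm

lemma integral_highFreqArea_pi_gaussianReal_mul {ι : Type*} [Fintype ι] (lam : ι → ℝ)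
    {σ : NNReal} (hσ : σ ≠ 0) (m : ι → ℝ) :
    ∫ y, highFreqArea lam y ∂Measure.pi (fun i => gaussianReal (σ * m i) (σ ^ 2)) =
      ∫ y, highFreqArea lam y ∂Measure.pi (fun i => gaussianReal (m i) 1) := by
  rw [pi_gaussianReal_mul_eq_map_smul, integral_map (by fun_prop) (by fun_prop)]
  simp_rw [highFreqArea_smul (NNReal.coe_ne_zero.2 hσ)]

theorem expected_high_frequency_area_monotone_general
    {N : ℕ} (hN : 0 < N)
    (lam : Fin N → ℝ) (hlam0 : lam ⟨0, hN⟩ = 0)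
    (hlampos : ∀ i : Fin N, i ≠ ⟨0, hN⟩ → 0 < lam i)
    (F : ℝ → NNReal → ℝ)
    (hF : ∀ (μ : ℝ) (σ : NNReal), F μ σ =
      ∫ y : Fin N → ℝ,
        (∑ i, lam i * (y i) ^ 2) / (∑ i, (y i) ^ 2)
      ∂(Measure.pi fun i : Fin N =>
          if i = ⟨0, hN⟩ then gaussianReal (μ * Real.sqrt N) (σ ^ 2)
          else gaussianReal 0 (σ ^ 2))) :
    ∀ (μ₁ μ₂ : ℝ) (σ₁ σ₂ : NNReal), μ₁ ≠ 0 → μ₂ ≠ 0 → 0 < σ₁ → 0 < σ₂ →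
      (σ₁ : ℝ) / |μ₁| ≤ (σ₂ : ℝ) / |μ₂| → F μ₁ σ₁ ≤ F μ₂ σ₂ := by
  obtain ⟨n, rfl⟩ : ∃ n, N = n + 1 := ⟨N - 1, by omega⟩
  intro μ₁ μ₂ σ₁ σ₂ hμ₁ _ hσ₁ hσ₂ hle
  have h00 : (⟨0, hN⟩ : Fin (n + 1)) = 0 := rfl
  simp only [h00] at hlam0 hlampos hF
  set s := √(n + 1 : ℕ)
  have hlam : 0 ≤ lam := fun i =>
    (eq_or_ne i 0).elim (fun hi => (hi ▸ hlam0).ge) fun hi => (hlampos i hi).le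
  have hF' : ∀ μ σ, 0 < σ → F μ σ = ∫ y, highFreqArea lam y
      ∂Measure.pi (fun i => gaussianReal (if i = 0 then μ * s / σ else 0) 1) := by
    intro μ σ hσ
    rw [hF, ← integral_highFreqArea_pi_gaussianReal_mul lam hσ.ne']
    congr 2
    funext i
    split_ifs
    · field_simp
    · rw [mul_zero]
  have hsq : ∀ (μ : ℝ) (σ : NNReal), (μ * s / σ) ^ 2 = s ^ 2 / ((σ : ℝ) / |μ|) ^ 2 := by
    intro μ σ
    rw [div_pow, div_pow, sq_abs, div_div_eq_mul_div]
    ring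
  rw [hF' μ₁ σ₁ hσ₁, hF' μ₂ σ₂ hσ₂]
  refine integral_highFreqArea_anti hlam hlam0 ?_
  rw [hsq, hsq]
  have : 0 < (σ₁ : ℝ) / |μ₁| := by positivity
  gcongr

/-- Let `L = D - A = U Λ Uᵀ` be the Laplacian of a connected graph, with eigenvalues
`0 = λ₁ < λ₂ ≤ ⋯ ≤ λ_N`. For `x ∼ N(μ e_N, σ² I_N)` with `μ ≠ 0`, after rotation the
coordinates satisfy `x̂ 0 ∼ N(μ√N, σ²)` and `x̂ i ∼ N(0, σ²)` independently, so
`E[S_high] = E[(∑_{i≥2} λᵢ x̂ᵢ²)/(∑ᵢ x̂ᵢ²)]` is given by the integral `F μ σ` below. This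
expectation depends on `(μ,σ)` only through `σ/|μ|` and is monotonically increasing in the
anomaly degree `σ/|μ|`. -/
theorem expected_high_frequency_area_monotone
    {N : ℕ} (hN : 0 < N)
    (lam : Fin N → ℝ) (hlam0 : lam ⟨0, hN⟩ = 0)
    (hlampos : ∀ i : Fin N, i ≠ ⟨0, hN⟩ → 0 < lam i)
    (hmono : Monotone lam)
    (F : ℝ → NNReal → ℝ)
    (hF : ∀ (μ : ℝ) (σ : NNReal), F μ σ =
      ∫ y : Fin N → ℝ,
        (∑ i, lam i * (y i) ^ 2) / (∑ i, (y i) ^ 2)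
      ∂(Measure.pi fun i : Fin N =>
          if i = ⟨0, hN⟩ then gaussianReal (μ * Real.sqrt N) (σ ^ 2)
          else gaussianReal 0 (σ ^ 2))) :
    ∀ (μ₁ μ₂ : ℝ) (σ₁ σ₂ : NNReal), μ₁ ≠ 0 → μ₂ ≠ 0 → 0 < σ₁ → 0 < σ₂ →
      (σ₁ : ℝ) / |μ₁| ≤ (σ₂ : ℝ) / |μ₂| → F μ₁ σ₁ ≤ F μ₂ σ₂ :=
  expected_high_frequency_area_monotone_general hN lam hlam0 hlampos F hF
end
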